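/- arXiv:2211.01499 — 3 statements merged into one kernel-verified Lean document; each statement's English description precedes it below -/
import Mathlib

section
/- Let 𝒴 ⊆ ℂⁿ be a p-dimensional subspace whose smallest (p-th largest) Ritz value η_p of A in 𝒴 satisfies η_p > λ_{p+1}. Then 𝒴 ∩ span{x_{p+1}, …, xₙ} = {0}; equivalently, for X = [x₁, …, x_p] and any basis matrix Y ∈ ℂ^{n×p} of 𝒴, the p×p matrix XᴴY is invertible. -/
/-- The Rayleigh quotient `ρ(v) = (vᴴAv)/(vᴴv)` of the Hermitian matrix `A`. -/
noncomputable def rayleigh {n : ℕ} (A : Matrix (Fin n) (Fin n) ℂ)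
    (v : EuclideanSpace ℂ (Fin n)) : ℝ :=
  ((inner ℂ v (Matrix.toEuclideanLin A v) : ℂ)).re / ‖v‖ ^ 2

/-- The `i`-th largest Ritz value (1-indexed, `i ∈ {1, …, dim S}`) of the Hermitian
matrix `A` in the subspace `S`, characterized via the Courant–Fischer max-min
principle applied inside `S` (equivalently, the `i`-th largest eigenvalue of
`SᴴAS` for any orthonormal basis matrix `S`). -/
noncomputable def ritzValue {n : ℕ} (A : Matrix (Fin n) (Fin n) ℂ)
    (S : Submodule ℂ (EuclideanSpace ℂ (Fin n))) (i : ℕ) : ℝ :=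
  sSup {r : ℝ | ∃ T : Submodule ℂ (EuclideanSpace ℂ (Fin n)), T ≤ S ∧
    Module.finrank ℂ T = i ∧ ∀ v ∈ T, v ≠ 0 → r ≤ rayleigh A v}

/-- `f(A) = ∑ j, f(λ_j) x_j x_jᴴ` as a linear operator, for eigenvalues `lam`
and orthonormal eigenvectors `x` of `A`. -/
noncomputable def matFun {n : ℕ} (lam : Fin n → ℝ)
    (x : Fin n → EuclideanSpace ℂ (Fin n)) (f : ℝ → ℝ) :
    EuclideanSpace ℂ (Fin n) →ₗ[ℂ] EuclideanSpace ℂ (Fin n) :=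
  ∑ j : Fin n, (f (lam j) : ℂ) • ((innerSL ℂ (x j)).toLinearMap.smulRight (x j))

/-- `y` is a Ritz vector of `A` in `S` associated with the Ritz value `η`:
`y ∈ S`, `y ≠ 0`, `ρ(y) = η` and `Ay − ηy ⊥ S`. -/
def IsRitzVector {n : ℕ} (A : Matrix (Fin n) (Fin n) ℂ)
    (S : Submodule ℂ (EuclideanSpace ℂ (Fin n))) (η : ℝ)
    (y : EuclideanSpace ℂ (Fin n)) : Prop :=
  y ∈ S ∧ y ≠ 0 ∧ rayleigh A y = η ∧
    ∀ v ∈ S, (inner ℂ v (Matrix.toEuclideanLin A y - (η : ℂ) • y) : ℂ) = 0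

/-!
If some nonzero `v ∈ 𝒴` lay in `span {x_{p+1}, …, x_n}`, its Rayleigh quotient would be at most
`λ_{p+1}`; but `𝒴` is the only `p`-dimensional subspace of itself, so the max-min value `η_p` is
at most every Rayleigh quotient on `𝒴`, contradicting `η_p > λ_{p+1}`. For the matrix `XᴴY`, a
kernel vector `c` gives `Yc ∈ 𝒴` orthogonal to `x₁, …, x_p`, hence in that span, hence zero.
-/

open Submodule ComplexConjugate

section InnerProductSpace

variable {𝕜 E ι : Type*} [RCLike 𝕜] [NormedAddCommGroup E] [InnerProductSpace 𝕜 E]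

theorem re_inner_apply_le_of_mem_span_eigenvectors (T : E →ₗ[𝕜] E) {lam : ι → ℝ}
    {x : ι → E} (hx : Orthonormal 𝕜 x) (heig : ∀ i, T (x i) = (lam i : 𝕜) • x i)
    {s : Set ι} {c : ℝ} (hc : ∀ i ∈ s, lam i ≤ c) {v : E} (hv : v ∈ span 𝕜 (x '' s)) :
    RCLike.re (inner 𝕜 v (T v)) ≤ c * ‖v‖ ^ 2 := by
  obtain ⟨t, hts, a, rfl⟩ := (mem_span_image_iff_exists_fun 𝕜).mp hv
  have hxt : Orthonormal 𝕜 (x ∘ (↑) : t → E) := hx.comp _ Subtype.val_injective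
  have hT : T (∑ i, a i • x i) = ∑ i, (a i * lam i) • x i := by
    simp only [map_sum, map_smul, heig, smul_smul]
  have hinner (b : t → 𝕜) : inner 𝕜 (∑ i, a i • x i) (∑ i, b i • x i) = ∑ i, conj (a i) * b i :=
    hxt.inner_sum a b Finset.univ
  rw [hT, ← inner_self_eq_norm_sq (𝕜 := 𝕜), hinner, hinner, map_sum, map_sum, Finset.mul_sum]
  refine Finset.sum_le_sum fun i _ => ?_
  rw [← mul_assoc, RCLike.conj_mul, ← RCLike.ofReal_pow, ← RCLike.ofReal_mul, RCLike.ofReal_re,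
    RCLike.ofReal_re, mul_comm c]
  gcongr
  exact hc i (hts i.2)

theorem Orthonormal.mem_span_image_of_inner_eq_zero [Fintype ι] [FiniteDimensional 𝕜 E]
    {x : ι → E} (hx : Orthonormal 𝕜 x) (hcard : Fintype.card ι = Module.finrank 𝕜 E)
    {s : Set ι} {w : E} (hw : ∀ i ∉ s, inner 𝕜 (x i) w = 0) : w ∈ span 𝕜 (x '' s) := by
  let b := OrthonormalBasis.mk hx (hx.linearIndependent.span_eq_top_of_card_eq_finrank' hcard).ge
  rw [← b.sum_repr' w]
  refine sum_mem fun i _ => ?_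
  by_cases hi : i ∈ s
  · exact smul_mem _ _ (subset_span ⟨i, hi, by simp [b]⟩)
  · simp [b, hw i hi]

theorem isUnit_of_inner_eq_zero_imp_eq_zero {m : Type*} [Fintype m] [DecidableEq m]
    (u B : m → E) (hB : LinearIndependent 𝕜 B)
    (h : ∀ w ∈ span 𝕜 (Set.range B), (∀ i, inner 𝕜 (u i) w = 0) → w = 0) :
    IsUnit (Matrix.of fun i j => inner 𝕜 (u i) (B j)) := by
  rw [Matrix.isUnit_iff_isUnit_det, isUnit_iff_ne_zero]
  intro hdet
  obtain ⟨a, ha0, ha⟩ := Matrix.exists_mulVec_eq_zero_iff.mpr hdet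
  refine ha0 (funext (Fintype.linearIndependent_iff.mp hB a (h _ ?_ fun i => ?_)))
  · exact sum_mem fun j _ => smul_mem _ _ (subset_span ⟨j, rfl⟩)
  · simpa [inner_sum, inner_smul_right, Matrix.mulVec, dotProduct, mul_comm]
      using congrFun ha i

end InnerProductSpace

section Matrix

variable {n : ℕ} (A : Matrix (Fin n) (Fin n) ℂ)

theorem neg_norm_le_rayleigh (v : EuclideanSpace ℂ (Fin n)) :
    -‖(Matrix.toEuclideanLin A).toContinuousLinearMap‖ ≤ rayleigh A v := by
  have hquot :
      rayleigh A v = (Matrix.toEuclideanLin A).toContinuousLinearMap.rayleighQuotient v := by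
    rw [rayleigh, ContinuousLinearMap.rayleighQuotient, ContinuousLinearMap.reApplyInnerSelf_apply,
      inner_re_symm]
    rfl
  exact hquot ▸ neg_le_of_abs_le (ContinuousLinearMap.rayleighQuotient_le_norm _ v)

theorem ritzValue_finrank_le_rayleigh {S : Submodule ℂ (EuclideanSpace ℂ (Fin n))}
    {v : EuclideanSpace ℂ (Fin n)} (hv : v ∈ S) (hv0 : v ≠ 0) :
    ritzValue A S (Module.finrank ℂ S) ≤ rayleigh A v := by
  refine csSup_le ⟨_, S, le_rfl, rfl, fun w _ _ => neg_norm_le_rayleigh A w⟩ ?_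
  rintro r ⟨T, hTS, hT, hr⟩
  exact hr v (eq_of_le_of_finrank_eq hTS hT ▸ hv) hv0

theorem rayleigh_le_of_mem_span_eigenvectors {lam : Fin n → ℝ}
    {x : Fin n → EuclideanSpace ℂ (Fin n)} (hx : Orthonormal ℂ x)
    (heig : ∀ j, Matrix.toEuclideanLin A (x j) = (lam j : ℂ) • x j)
    {s : Set (Fin n)} {c : ℝ} (hc : ∀ j ∈ s, lam j ≤ c)
    {v : EuclideanSpace ℂ (Fin n)} (hv : v ∈ span ℂ (x '' s)) (hv0 : v ≠ 0) :
    rayleigh A v ≤ c :=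
  (div_le_iff₀ (by positivity)).mpr
    (re_inner_apply_le_of_mem_span_eigenvectors _ hx heig hc hv)

end Matrix

theorem stmt1_general {n p : ℕ} (hpn : p < n)
    (A : Matrix (Fin n) (Fin n) ℂ)
    (lam : Fin n → ℝ) (hlam : Antitone lam)
    (x : Fin n → EuclideanSpace ℂ (Fin n)) (hx : Orthonormal ℂ x)
    (heig : ∀ j, Matrix.toEuclideanLin A (x j) = (lam j : ℂ) • x j)
    (Y : Submodule ℂ (EuclideanSpace ℂ (Fin n))) (hY : Module.finrank ℂ Y = p)
    (hηp : lam ⟨p, hpn⟩ < ritzValue A Y p) :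
    Y ⊓ Submodule.span ℂ (x '' {j | p ≤ (j : ℕ)}) = ⊥ ∧
    ∀ B : Fin p → EuclideanSpace ℂ (Fin n), LinearIndependent ℂ B →
      Submodule.span ℂ (Set.range B) = Y →
      IsUnit (Matrix.of fun i j : Fin p =>
        (inner ℂ (x (Fin.castLE hpn.le i)) (B j) : ℂ)) := by
  have hbot : Y ⊓ span ℂ (x '' {j | p ≤ (j : ℕ)}) = ⊥ := by
    refine eq_bot_iff.mpr fun v ⟨hvY, hvtail⟩ => (mem_bot ℂ).mpr (by_contra fun hv0 => ?_)
    have hlam_tail : ∀ j ∈ {j : Fin n | p ≤ (j : ℕ)}, lam j ≤ lam ⟨p, hpn⟩ :=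
      fun j hj => hlam (Fin.le_def.mpr hj)
    refine hηp.not_ge ?_
    calc ritzValue A Y p = ritzValue A Y (Module.finrank ℂ Y) := by rw [hY]
      _ ≤ rayleigh A v := ritzValue_finrank_le_rayleigh A hvY hv0
      _ ≤ lam ⟨p, hpn⟩ := rayleigh_le_of_mem_span_eigenvectors A hx heig hlam_tail hvtail hv0
  refine ⟨hbot, fun B hB hBY => isUnit_of_inner_eq_zero_imp_eq_zero _ B hB fun w hwY hw => ?_⟩
  have hwtail : w ∈ span ℂ (x '' {j | p ≤ (j : ℕ)}) :=
    hx.mem_span_image_of_inner_eq_zero (by simp) fun i hi => hw ⟨i, not_le.mp hi⟩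
  exact (mem_bot ℂ).mp (hbot ▸ ⟨hBY ▸ hwY, hwtail⟩)

/-- If the smallest Ritz value `η_p` of `A` in the `p`-dimensional
subspace `𝒴` satisfies `η_p > λ_{p+1}`, then `𝒴 ∩ span{x_{p+1},…,x_n} = {0}`;
equivalently, for `X = [x₁,…,x_p]` and any basis matrix `Y` of `𝒴`, the `p×p`
matrix `XᴴY` is invertible.  (0-indexed: `lam ⟨j⟩` is `λ_{j+1}`.) -/
theorem stmt1 {n p : ℕ} (hp : 0 < p) (hpn : p < n)
    (A : Matrix (Fin n) (Fin n) ℂ) (hA : A.IsHermitian)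
    (lam : Fin n → ℝ) (hlam : Antitone lam)
    (x : Fin n → EuclideanSpace ℂ (Fin n)) (hx : Orthonormal ℂ x)
    (heig : ∀ j, Matrix.toEuclideanLin A (x j) = (lam j : ℂ) • x j)
    (Y : Submodule ℂ (EuclideanSpace ℂ (Fin n))) (hY : Module.finrank ℂ Y = p)
    (hηp : lam ⟨p, hpn⟩ < ritzValue A Y p) :
    Y ⊓ Submodule.span ℂ (x '' {j | p ≤ (j : ℕ)}) = ⊥ ∧
    ∀ B : Fin p → EuclideanSpace ℂ (Fin n), LinearIndependent ℂ B →
      Submodule.span ℂ (Set.range B) = Y →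
      IsUnit (Matrix.of fun i j : Fin p =>
        (inner ℂ (x (Fin.castLE hpn.le i)) (B j) : ℂ)) :=
  stmt1_general hpn A lam hlam x hx heig Y hY hηp
end

section
/- Let u, v ∈ ℂⁿ be nonzero vectors and let l ∈ {1, …, n−1} satisfy λ_l ≥ ρ(u) ≥ λ_{l+1}. If |xⱼᴴv| ≤ |xⱼᴴu| for every j ∈ {1, …, l} and |xⱼᴴv| ≥ |xⱼᴴu| for every j ∈ {l+1, …, n}, then ρ(u) ≥ ρ(v). -/
/-!
Expanding in the eigenbasis, `vᴴAv - ρ ‖v‖² = ∑ⱼ (λⱼ - ρ) |xⱼᴴv|²`. Take `ρ = ρ(u)`, so that this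
sum vanishes for `u`. The sign of `λⱼ - ρ(u)` is `≥ 0` for `j ≤ l` and `≤ 0` for `j > l`, which is
exactly where the weights `|xⱼᴴv|²` are smaller, resp. larger, than `|xⱼᴴu|²`. Hence the sum for
`v` is termwise at most the one for `u`, i.e. at most `0`, which says `ρ(v) ≤ ρ(u)`.
-/

open scoped InnerProductSpace

section EigenExpansion

variable {ι 𝕜 E : Type*} [Fintype ι] [RCLike 𝕜] [NormedAddCommGroup E] [InnerProductSpace 𝕜 E]

theorem OrthonormalBasis.re_inner_map_self_eq_sum (b : OrthonormalBasis ι 𝕜 E) (T : E →ₗ[𝕜] E)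
    {μ : ι → ℝ} (hT : ∀ i, T (b i) = (μ i : 𝕜) • b i) (w : E) :
    RCLike.re ⟪w, T w⟫_𝕜 = ∑ i, μ i * ‖⟪b i, w⟫_𝕜‖ ^ 2 := by
  have hTw : T w = ∑ i, ((μ i : 𝕜) * ⟪b i, w⟫_𝕜) • b i := by
    conv_lhs => rw [← b.sum_repr' w]
    simp only [map_sum, map_smul, hT, smul_smul, mul_comm]
  rw [hTw, inner_sum, map_sum]
  refine Finset.sum_congr rfl fun i _ => ?_
  rw [inner_smul_right, ← inner_conj_symm w (b i), mul_assoc, RCLike.mul_conj]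
  norm_cast

theorem OrthonormalBasis.re_inner_map_self_sub_mul_norm_sq_eq_sum (b : OrthonormalBasis ι 𝕜 E)
    (T : E →ₗ[𝕜] E) {μ : ι → ℝ} (hT : ∀ i, T (b i) = (μ i : 𝕜) • b i) (c : ℝ) (w : E) :
    RCLike.re ⟪w, T w⟫_𝕜 - c * ‖w‖ ^ 2 = ∑ i, (μ i - c) * ‖⟪b i, w⟫_𝕜‖ ^ 2 := by
  simp only [b.re_inner_map_self_eq_sum T hT, ← b.sum_sq_norm_inner_right w, Finset.mul_sum,
    ← Finset.sum_sub_distrib, sub_mul]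

end EigenExpansion

section Rayleigh

variable {n : ℕ} (A : Matrix (Fin n) (Fin n) ℂ)

theorem rayleigh_mul_norm_sq (w : EuclideanSpace ℂ (Fin n)) :
    rayleigh A w * ‖w‖ ^ 2 = (⟪w, Matrix.toEuclideanLin A w⟫_ℂ).re :=
  div_mul_cancel_of_imp fun hw => by simp_all

theorem rayleigh_le_iff {w : EuclideanSpace ℂ (Fin n)} (hw : w ≠ 0) (c : ℝ) :
    rayleigh A w ≤ c ↔ (⟪w, Matrix.toEuclideanLin A w⟫_ℂ).re - c * ‖w‖ ^ 2 ≤ 0 := by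
  rw [rayleigh, div_le_iff₀ (by positivity), sub_nonpos]

end Rayleigh

theorem sub_mul_sq_le_of_antitone {n : ℕ} {lam a b : Fin n → ℝ} (hlam : Antitone lam)
    (ha : ∀ j, 0 ≤ a j) (hb : ∀ j, 0 ≤ b j) {ρ : ℝ} {l : ℕ} (hln : l < n)
    (hup : ρ ≤ lam ⟨l - 1, (Nat.sub_le l 1).trans_lt hln⟩) (hlo : lam ⟨l, hln⟩ ≤ ρ)
    (hhead : ∀ j : Fin n, (j : ℕ) < l → b j ≤ a j) (htail : ∀ j : Fin n, l ≤ (j : ℕ) → a j ≤ b j)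
    (j : Fin n) : (lam j - ρ) * b j ^ 2 ≤ (lam j - ρ) * a j ^ 2 := by
  rcases lt_or_ge (j : ℕ) l with hj | hj
  · have hρ : ρ ≤ lam j := hup.trans (hlam (Fin.mk_le_mk.mpr (by omega)))
    exact mul_le_mul_of_nonneg_left (pow_le_pow_left₀ (hb j) (hhead j hj) 2) (sub_nonneg.mpr hρ)
  · have hρ : lam j ≤ ρ := (hlam (Fin.mk_le_mk.mpr hj)).trans hlo
    exact mul_le_mul_of_nonpos_left (pow_le_pow_left₀ (ha j) (htail j hj) 2) (sub_nonpos.mpr hρ)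

-- Indices are 0-based: `lam ⟨j, _⟩` is `λ_{j+1}`.
/-- If `λ_l ≥ ρ(u) ≥ λ_{l+1}` and the eigenvector components of `v`
are dominated by those of `u` for `j ≤ l` while dominating for `j > l`, then
`ρ(u) ≥ ρ(v)`.  (0-indexed: `lam ⟨j⟩` is `λ_{j+1}`.) -/
theorem stmt3 {n : ℕ}
    (A : Matrix (Fin n) (Fin n) ℂ)
    (lam : Fin n → ℝ) (hlam : Antitone lam)
    (x : Fin n → EuclideanSpace ℂ (Fin n)) (hx : Orthonormal ℂ x)
    (heig : ∀ j, Matrix.toEuclideanLin A (x j) = (lam j : ℂ) • x j)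
    (u v : EuclideanSpace ℂ (Fin n)) (hv : v ≠ 0)
    (l : ℕ) (hln : l < n)
    (hup : rayleigh A u ≤ lam ⟨l - 1, by omega⟩)
    (hlo : lam ⟨l, hln⟩ ≤ rayleigh A u)
    (h1 : ∀ j : Fin n, (j : ℕ) < l → ‖(inner ℂ (x j) v : ℂ)‖ ≤ ‖(inner ℂ (x j) u : ℂ)‖)
    (h2 : ∀ j : Fin n, l ≤ (j : ℕ) → ‖(inner ℂ (x j) u : ℂ)‖ ≤ ‖(inner ℂ (x j) v : ℂ)‖) :
    rayleigh A v ≤ rayleigh A u := by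
  let b : OrthonormalBasis (Fin n) ℂ (EuclideanSpace ℂ (Fin n)) :=
    .mk hx (hx.linearIndependent.span_eq_top_of_card_eq_finrank' (by simp)).ge
  have hb : ⇑b = x := OrthonormalBasis.coe_mk _ _
  have expand := b.re_inner_map_self_sub_mul_norm_sq_eq_sum (Matrix.toEuclideanLin A)
    (μ := lam) (by simpa [hb] using heig) (rayleigh A u)
  simp only [hb, RCLike.re_to_complex] at expand
  rw [rayleigh_le_iff A hv, expand]
  calc ∑ j, (lam j - rayleigh A u) * ‖⟪x j, v⟫_ℂ‖ ^ 2
      ≤ ∑ j, (lam j - rayleigh A u) * ‖⟪x j, u⟫_ℂ‖ ^ 2 :=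
        Finset.sum_le_sum fun j _ => sub_mul_sq_le_of_antitone hlam (fun _ => norm_nonneg _)
          (fun _ => norm_nonneg _) hln hup hlo h1 h2 j
    _ = 0 := by rw [← expand, ← rayleigh_mul_norm_sq, sub_self]
end

section
/- Let 𝒴 ⊆ ℂⁿ be a p-dimensional subspace, let i ∈ {1, …, p}, and define 𝒴_{[1,i]∪(p,n]} = span{x_{i+1}, …, x_p}^⊥ ∩ 𝒴. Then dim 𝒴_{[1,i]∪(p,n]} ≥ i. If moreover the smallest Ritz value η_p of A in 𝒴 satisfies η_p > λ_{p+1}, then dim 𝒴_{[1,i]∪(p,n]} = i and the image of 𝒴_{[1,i]∪(p,n]} under the orthogonal projection onto 𝒳 = span{x₁, …, x_p} equals span{x₁, …, x_i}. If in addition f : ℝ → ℝ satisfies f(λⱼ) ≠ 0 for every j ∈ {1, …, i}, then f(A)𝒴_{[1,i]∪(p,n]} also has dimension i. -/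
/-!
Let `W = span{x_{i+1}, …, x_p}`. Counting dimensions, `dim (W^⊥ ∩ 𝒴) ≥ dim 𝒴 - dim W = i`.

If `η_p > λ_{p+1}`, every nonzero vector of `𝒴` has Rayleigh quotient `> λ_{p+1}` (the only
`p`-dimensional subspace of `𝒴` in the max-min characterization of `η_p` is `𝒴` itself), while a
nonzero vector orthogonal to `𝒳` has Rayleigh quotient `≤ λ_{p+1}`; so `𝒴 ∩ 𝒳^⊥ = 0`. A vector
of `𝒴̃` is already orthogonal to `x_{i+1}, …, x_p`, hence vanishes once its coordinates along
`x_1, …, x_i` do. The projection onto `𝒳` and `f(A)` both act diagonally in the eigenbasis without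
killing those coordinates, so both are injective on `𝒴̃`. The projection maps `𝒴̃` into
`span{x_1, …, x_i}`, which forces `dim 𝒴̃ = i` and equality of the image.
-/

open scoped InnerProductSpace
open Module Submodule

theorem Submodule.finrank_map_of_disjoint_ker {K V W : Type*} [DivisionRing K]
    [AddCommGroup V] [Module K V] [AddCommGroup W] [Module K W] {g : V →ₗ[K] W}
    {U : Submodule K V} (h : Disjoint U (LinearMap.ker g)) :
    finrank K (U.map g) = finrank K U := by
  have hinj : Function.Injective (g ∘ₗ U.subtype) := by
    rw [← LinearMap.ker_eq_bot, LinearMap.ker_eq_bot']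
    exact fun v hv ↦ Subtype.ext (LinearMap.disjoint_ker.1 h v v.2 hv)
  rw [← LinearMap.finrank_range_of_inj hinj, LinearMap.range_comp, U.range_subtype]

theorem Fin.ncard_preimage_val {n : ℕ} {t : Set ℕ} (ht : t ⊆ Set.Iio n) :
    (Fin.val ⁻¹' t : Set (Fin n)).ncard = t.ncard :=
  Set.ncard_preimage_of_injective_subset_range Fin.val_injective fun k hk ↦ ⟨⟨k, ht hk⟩, rfl⟩

section InnerProductSpace

variable {𝕜 E ι : Type*} [RCLike 𝕜] [NormedAddCommGroup E] [InnerProductSpace 𝕜 E]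

theorem Submodule.finrank_le_finrank_add_finrank_orthogonal_inf [FiniteDimensional 𝕜 E]
    (W Y : Submodule 𝕜 E) : finrank 𝕜 Y ≤ finrank 𝕜 W + finrank 𝕜 ↥(Wᗮ ⊓ Y) := by
  have h₁ := Submodule.finrank_sup_add_finrank_inf_eq Wᗮ Y
  have h₂ := W.finrank_add_finrank_orthogonal
  have h₃ := Submodule.finrank_le (Wᗮ ⊔ Y)
  omega

theorem Submodule.mem_orthogonal_span_image_iff (e : ι → E) {s : Set ι} {u : E} :
    u ∈ (span 𝕜 (e '' s))ᗮ ↔ ∀ j ∈ s, ⟪e j, u⟫_𝕜 = 0 := by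
  rw [← span_singleton_le_iff_mem, ← isOrtho_iff_le, isOrtho_comm, isOrtho_span]
  simp

theorem disjoint_ker_of_inner_eq_mul {e : ι → E} {U : Submodule 𝕜 E} {s : Set ι}
    (hU : ∀ v ∈ U, (∀ j ∈ s, ⟪e j, v⟫_𝕜 = 0) → v = 0) {g : E →ₗ[𝕜] E} {d : ι → 𝕜}
    (hg : ∀ j ∈ s, ∀ v, ⟪e j, g v⟫_𝕜 = d j * ⟪e j, v⟫_𝕜) (hd : ∀ j ∈ s, d j ≠ 0) :
    Disjoint U (LinearMap.ker g) :=
  LinearMap.disjoint_ker.2 fun v hv hgv ↦ hU v hv fun j hj ↦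
    (mul_eq_zero.1 (by rw [← hg j hj, hgv, inner_zero_right])).resolve_left (hd j hj)

variable [Fintype ι] (b : OrthonormalBasis ι 𝕜 E)

theorem OrthonormalBasis.mem_span_image_iff {s : Set ι} {u : E} :
    u ∈ span 𝕜 (b '' s) ↔ ∀ j ∉ s, ⟪b j, u⟫_𝕜 = 0 := by
  rw [← b.coe_toBasis, b.toBasis.mem_span_image, Set.subset_def]
  simp [not_imp_comm, b.repr_apply_apply]

theorem OrthonormalBasis.finrank_span_image (s : Set ι) :
    finrank 𝕜 (span 𝕜 (b '' s)) = s.ncard := by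
  have := toENat_rank_span_set (b.orthonormal.linearIndependent.linearIndepOn (s := s))
  rw [Set.ncard, ← this]
  simp [finrank]

theorem OrthonormalBasis.inner_starProjection_span_image [FiniteDimensional 𝕜 E]
    (s : Set ι) [DecidablePred (· ∈ s)] (j : ι) (v : E) :
    ⟪b j, (span 𝕜 (b '' s)).starProjection v⟫_𝕜 = if j ∈ s then ⟪b j, v⟫_𝕜 else 0 := by
  rw [← inner_starProjection_left_eq_right]
  split_ifs with hj
  · rw [starProjection_eq_self_iff.2 (subset_span (Set.mem_image_of_mem b hj))]
  · have : b j ∈ (span 𝕜 (b '' s))ᗮ := (mem_orthogonal_span_image_iff b).2 fun k hk ↦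
      b.orthonormal.inner_eq_zero (by rintro rfl; exact hj hk)
    rw [(starProjection_apply_eq_zero_iff _).2 this, inner_zero_left]

theorem OrthonormalBasis.map_starProjection_span_image_eq [FiniteDimensional 𝕜 E]
    {s t : Set ι} (hts : t ⊆ s) {U : Submodule 𝕜 E}
    (hU : ∀ v ∈ U, (∀ j ∈ t, ⟪b j, v⟫_𝕜 = 0) → v = 0)
    (hUst : ∀ v ∈ U, ∀ j ∈ s, j ∉ t → ⟪b j, v⟫_𝕜 = 0) (hdim : t.ncard ≤ finrank 𝕜 U) :
    finrank 𝕜 U = t.ncard ∧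
      U.map ((span 𝕜 (b '' s)).starProjection : E →ₗ[𝕜] E) = span 𝕜 (b '' t) := by
  classical
  set P := (span 𝕜 (b '' s)).starProjection
  have hinj : finrank 𝕜 (U.map (P : E →ₗ[𝕜] E)) = finrank 𝕜 U :=
    finrank_map_of_disjoint_ker <| disjoint_ker_of_inner_eq_mul hU (d := 1)
      (fun j hj v ↦ by
        rw [ContinuousLinearMap.coe_coe, b.inner_starProjection_span_image, if_pos (hts hj),
          Pi.one_apply, one_mul])
      fun _ _ ↦ one_ne_zero
  have hle : U.map (P : E →ₗ[𝕜] E) ≤ span 𝕜 (b '' t) := by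
    rintro _ ⟨v, hv, rfl⟩
    refine b.mem_span_image_iff.2 fun j hj ↦ ?_
    rw [ContinuousLinearMap.coe_coe, b.inner_starProjection_span_image]
    split_ifs with hjs
    exacts [hUst v hv j hjs hj, rfl]
  have hdimU : finrank 𝕜 U = t.ncard :=
    le_antisymm (hinj ▸ b.finrank_span_image t ▸ finrank_mono hle) hdim
  exact ⟨hdimU, eq_of_le_of_finrank_le hle (by rw [b.finrank_span_image, hinj, hdimU])⟩

end InnerProductSpace

section Spectral

variable {n : ℕ} {lam : Fin n → ℝ}

theorem inner_matFun {x : Fin n → EuclideanSpace ℂ (Fin n)} (hx : Orthonormal ℂ x)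
    (f : ℝ → ℝ) (k : Fin n) (v : EuclideanSpace ℂ (Fin n)) :
    ⟪x k, matFun lam x f v⟫_ℂ = f (lam k) * ⟪x k, v⟫_ℂ := by
  classical
  simp [matFun, orthonormal_iff_ite.1 hx]

theorem matFun_apply_self {x : Fin n → EuclideanSpace ℂ (Fin n)} (hx : Orthonormal ℂ x)
    (f : ℝ → ℝ) (j : Fin n) : matFun lam x f (x j) = (f (lam j) : ℂ) • x j := by
  classical
  simp [matFun, orthonormal_iff_ite.1 hx]

variable {A : Matrix (Fin n) (Fin n) ℂ}
  (b : OrthonormalBasis (Fin n) ℂ (EuclideanSpace ℂ (Fin n)))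
  (heig : ∀ j, Matrix.toEuclideanLin A (b j) = (lam j : ℂ) • b j)
include heig

theorem toEuclideanLin_eq_matFun_id : Matrix.toEuclideanLin A = matFun lam b id :=
  b.toBasis.ext fun j ↦ by
    rw [b.coe_toBasis, heig, matFun_apply_self b.orthonormal, id]

theorem re_inner_toEuclideanLin_self (v : EuclideanSpace ℂ (Fin n)) :
    (⟪v, Matrix.toEuclideanLin A v⟫_ℂ).re = ∑ j, lam j * ‖⟪b j, v⟫_ℂ‖ ^ 2 := by
  rw [← b.sum_inner_mul_inner, Complex.re_sum, toEuclideanLin_eq_matFun_id b heig]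
  refine Finset.sum_congr rfl fun j _ ↦ ?_
  rw [inner_matFun b.orthonormal, ← inner_conj_symm, mul_left_comm, RCLike.conj_mul, id]
  simp [← Complex.ofReal_pow]

theorem rayleigh_le_of_forall {c : ℝ} {v : EuclideanSpace ℂ (Fin n)} (hv : v ≠ 0)
    (h : ∀ j, ⟪b j, v⟫_ℂ ≠ 0 → lam j ≤ c) : rayleigh A v ≤ c := by
  rw [rayleigh, div_le_iff₀ (by positivity), re_inner_toEuclideanLin_self b heig,
    ← b.sum_sq_norm_inner_right, Finset.mul_sum]
  refine Finset.sum_le_sum fun j _ ↦ ?_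
  by_cases hj : ⟪b j, v⟫_ℂ = 0
  · simp [hj]
  · exact mul_le_mul_of_nonneg_right (h j hj) (by positivity)

theorem le_rayleigh_of_forall {c : ℝ} {v : EuclideanSpace ℂ (Fin n)} (hv : v ≠ 0)
    (h : ∀ j, c ≤ lam j) : c ≤ rayleigh A v := by
  rw [rayleigh, le_div_iff₀ (by positivity), re_inner_toEuclideanLin_self b heig,
    ← b.sum_sq_norm_inner_right, Finset.mul_sum]
  exact Finset.sum_le_sum fun j _ ↦ mul_le_mul_of_nonneg_right (h j) (by positivity)

end Spectral

-- `hm` makes the max-min set defining the Ritz value nonempty; `sSup ∅ = 0` would say nothing.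
theorem lt_rayleigh_of_lt_ritzValue {n : ℕ} {A : Matrix (Fin n) (Fin n) ℂ}
    {S : Submodule ℂ (EuclideanSpace ℂ (Fin n))} {c m : ℝ}
    (hm : ∀ v ∈ S, v ≠ 0 → m ≤ rayleigh A v) (hc : c < ritzValue A S (finrank ℂ S))
    {v : EuclideanSpace ℂ (Fin n)} (hv : v ∈ S) (hv0 : v ≠ 0) : c < rayleigh A v := by
  rw [ritzValue] at hc
  obtain ⟨r, ⟨T, hTS, hT, hr⟩, hcr⟩ :=
    exists_lt_of_lt_csSup (by exact ⟨m, S, le_rfl, rfl, hm⟩) hc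
  obtain rfl := Submodule.eq_of_le_of_finrank_eq hTS hT
  exact hcr.trans_le (hr v hv hv0)

theorem eq_zero_of_inner_eq_zero_of_lt_ritzValue {n p : ℕ} (hpn : p < n)
    {A : Matrix (Fin n) (Fin n) ℂ} {lam : Fin n → ℝ} (hlam : Antitone lam)
    (b : OrthonormalBasis (Fin n) ℂ (EuclideanSpace ℂ (Fin n)))
    (heig : ∀ j, Matrix.toEuclideanLin A (b j) = (lam j : ℂ) • b j)
    {Y : Submodule ℂ (EuclideanSpace ℂ (Fin n))} (hY : finrank ℂ Y = p)
    (hη : lam ⟨p, hpn⟩ < ritzValue A Y p) {v : EuclideanSpace ℂ (Fin n)} (hv : v ∈ Y)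
    (h : ∀ j : Fin n, (j : ℕ) < p → ⟪b j, v⟫_ℂ = 0) : v = 0 := by
  by_contra hv0
  have hlower : lam ⟨p, hpn⟩ < rayleigh A v :=
    lt_rayleigh_of_lt_ritzValue (m := lam ⟨n - 1, by omega⟩)
      (fun w _ hw ↦ le_rayleigh_of_forall b heig hw fun j ↦
        hlam (Fin.le_def.2 (Nat.le_sub_one_of_lt j.isLt)))
      (hY ▸ hη) hv hv0
  have hupper : rayleigh A v ≤ lam ⟨p, hpn⟩ :=
    rayleigh_le_of_forall b heig hv0 fun j hj ↦ hlam (Fin.le_def.2 (not_lt.1 (mt (h j) hj)))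
  exact hlower.not_ge hupper

theorem stmt8_general {n p i : ℕ} (hip : i ≤ p) (hpn : p < n)
    (A : Matrix (Fin n) (Fin n) ℂ)
    (lam : Fin n → ℝ) (hlam : Antitone lam)
    (x : Fin n → EuclideanSpace ℂ (Fin n)) (hx : Orthonormal ℂ x)
    (heig : ∀ j, Matrix.toEuclideanLin A (x j) = (lam j : ℂ) • x j)
    (Y : Submodule ℂ (EuclideanSpace ℂ (Fin n))) (hY : Module.finrank ℂ Y = p)
    (f : ℝ → ℝ)
    (Yt : Submodule ℂ (EuclideanSpace ℂ (Fin n)))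
    (hYt : Yt = (Submodule.span ℂ (x '' {j | i ≤ (j : ℕ) ∧ (j : ℕ) < p}))ᗮ ⊓ Y) :
    i ≤ Module.finrank ℂ Yt ∧
    (lam ⟨p, hpn⟩ < ritzValue A Y p →
      (Module.finrank ℂ Yt = i ∧
        Submodule.map
          (((Submodule.span ℂ (x '' {j | (j : ℕ) < p})).subtypeL.comp
            (Submodule.orthogonalProjectionOnto (Submodule.span ℂ (x '' {j | (j : ℕ) < p})))).toLinearMap)
          Yt = Submodule.span ℂ (x '' {j | (j : ℕ) < i})) ∧
      ((∀ j : Fin n, (j : ℕ) < i → f (lam j) ≠ 0) →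
        Module.finrank ℂ (Yt.map (matFun lam x f)) = i)) := by
  obtain ⟨b, rfl⟩ : ∃ b : OrthonormalBasis (Fin n) ℂ (EuclideanSpace ℂ (Fin n)), ⇑b = x :=
    ⟨.mk hx (hx.linearIndependent.span_eq_top_of_card_eq_finrank' (by simp)).ge,
      OrthonormalBasis.coe_mk _ _⟩
  have hW : finrank ℂ (span ℂ (b '' {j | i ≤ (j : ℕ) ∧ (j : ℕ) < p})) = p - i := by
    rw [b.finrank_span_image, ← Set.ncard_Ico_nat]
    exact Fin.ncard_preimage_val (t := Set.Ico i p) fun k hk ↦ hk.2.trans hpn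
  have hXi : {j : Fin n | (j : ℕ) < i}.ncard = i :=
    (Fin.ncard_preimage_val (t := Set.Iio i) fun k hk ↦
      (Set.mem_Iio.1 hk).trans_le (hip.trans hpn.le)).trans (Set.ncard_Iio_nat i)
  have hdim_ge : i ≤ finrank ℂ Yt := by
    have := finrank_le_finrank_add_finrank_orthogonal_inf
      (span ℂ (b '' {j | i ≤ (j : ℕ) ∧ (j : ℕ) < p})) Y
    rw [hYt]
    omega
  refine ⟨hdim_ge, fun hη ↦ ?_⟩
  obtain ⟨hYtW, hYtY⟩ := le_inf_iff.1 hYt.le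
  have hYt_inner : ∀ v ∈ Yt, ∀ j ∈ {j : Fin n | (j : ℕ) < p}, j ∉ {j : Fin n | (j : ℕ) < i} →
      ⟪b j, v⟫_ℂ = 0 :=
    fun v hv j hjp hji ↦ (mem_orthogonal_span_image_iff b).1 (hYtW hv) j ⟨not_lt.1 hji, hjp⟩
  have hker : ∀ v ∈ Yt, (∀ j ∈ {j : Fin n | (j : ℕ) < i}, ⟪b j, v⟫_ℂ = 0) → v = 0 :=
    fun v hv h ↦ eq_zero_of_inner_eq_zero_of_lt_ritzValue hpn hlam b heig hY hη (hYtY hv)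
      fun j hjp ↦ if hji : (j : ℕ) < i then h j hji else hYt_inner v hv j hjp hji
  obtain ⟨hdim, hmap⟩ := b.map_starProjection_span_image_eq (s := {j | (j : ℕ) < p})
    (t := {j | (j : ℕ) < i}) (fun _ hj ↦ lt_of_lt_of_le hj hip) hker hYt_inner
    (hXi.trans_le hdim_ge)
  rw [hXi] at hdim
  refine ⟨⟨hdim, hmap⟩, fun hf ↦ ?_⟩
  rw [finrank_map_of_disjoint_ker (disjoint_ker_of_inner_eq_mul hker
    (fun j _ ↦ inner_matFun b.orthonormal f j) fun j hj ↦ by exact_mod_cast hf j hj), hdim]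

/-- For `𝒴̃ = span{x_{i+1},…,x_p}^⊥ ∩ 𝒴` one has `dim 𝒴̃ ≥ i`;
if moreover `η_p > λ_{p+1}` then `dim 𝒴̃ = i` and the image of `𝒴̃` under the
orthogonal projection onto `𝒳 = span{x₁,…,x_p}` equals `span{x₁,…,x_i}`; if in
addition `f(λ_j) ≠ 0` for `j ∈ {1,…,i}` then `f(A)𝒴̃` also has dimension `i`.
(0-indexed: `lam ⟨j⟩` is `λ_{j+1}`.) -/
theorem stmt8 {n p i : ℕ} (hi : 1 ≤ i) (hip : i ≤ p) (hpn : p < n)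
    (A : Matrix (Fin n) (Fin n) ℂ) (hA : A.IsHermitian)
    (lam : Fin n → ℝ) (hlam : Antitone lam)
    (x : Fin n → EuclideanSpace ℂ (Fin n)) (hx : Orthonormal ℂ x)
    (heig : ∀ j, Matrix.toEuclideanLin A (x j) = (lam j : ℂ) • x j)
    (Y : Submodule ℂ (EuclideanSpace ℂ (Fin n))) (hY : Module.finrank ℂ Y = p)
    (f : ℝ → ℝ)
    (Yt : Submodule ℂ (EuclideanSpace ℂ (Fin n)))
    (hYt : Yt = (Submodule.span ℂ (x '' {j | i ≤ (j : ℕ) ∧ (j : ℕ) < p}))ᗮ ⊓ Y) :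
    i ≤ Module.finrank ℂ Yt ∧
    (lam ⟨p, hpn⟩ < ritzValue A Y p →
      (Module.finrank ℂ Yt = i ∧
        Submodule.map
          (((Submodule.span ℂ (x '' {j | (j : ℕ) < p})).subtypeL.comp
            (Submodule.orthogonalProjectionOnto (Submodule.span ℂ (x '' {j | (j : ℕ) < p})))).toLinearMap)
          Yt = Submodule.span ℂ (x '' {j | (j : ℕ) < i})) ∧
      ((∀ j : Fin n, (j : ℕ) < i → f (lam j) ≠ 0) →
        Module.finrank ℂ (Yt.map (matFun lam x f)) = i)) :=
  stmt8_general hip hpn A lam hlam x hx heig Y hY f Yt hYt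
end
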